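/- Polyline vertices and nested faces for a linear connection: in the setting of the explicit Moreau data for a linear connection (V, Π, f_0 as computed there), assume the chains are labeled so that ρ̃_0 < ρ̃_1 < ⋯ < ρ̃_{S−1} with ρ̃_n = r̃_n/ã_n, and that for each n the minimum threshold of chain n is attained only at the edge (1, i_n+1), i.e. r̃_n = r_{1,i_n+1} < min of the thresholds of the other edges of chain n. Let Π_j = {v ∈ Π : √(a_{1,i_{j−1}+1}) v_{1,i_{j−1}+1} = r_{1,i_{j−1}+1}} for j = 1, …, S, and define B_0 = 0 and, for j = 1, …, S, the points B_j ∈ V whose components along chain n satisfy √(a_e) B_j^e = ã_n · min{ρ̃_n, ρ̃_{j−1}} for every edge e of chain n. Then B_j lies in the relative interior of Π_1 ∩ ⋯ ∩ Π_j for j = 1, …, S, and the faces F_j = V ∩ Π_1 ∩ ⋯ ∩ Π_j of the parallelepiped Π ∩ V satisfy F_{S−1} ⊆ F_{S−2} ⊆ ⋯ ⊆ F_0 = Π ∩ V and dim F_{j−1} − dim F_j = 1 for j = 1, …, S−1. -/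

import Mathlib

open MeasureTheory Set

noncomputable section

/-- Edges of a linear connection: chain `n` has `c n + 2` edges, edge `⟨n,0⟩`
is the edge `(1, i_n+1)` and edge `⟨n, c n + 1⟩` is the edge `(i_{n+1}, N)`. -/
def LCEdge (S : ℕ) (c : Fin S → ℕ) : Type := Σ n : Fin S, Fin (c n + 2)

instance (S : ℕ) (c : Fin S → ℕ) : Fintype (LCEdge S c) := by unfold LCEdge; infer_instance

/-- The configuration space `E = ℝ^M` of a linear connection. -/
def LCSp (S : ℕ) (c : Fin S → ℕ) : Type := EuclideanSpace ℝ (LCEdge S c)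

instance (S : ℕ) (c : Fin S → ℕ) : NormedAddCommGroup (LCSp S c) := by
  unfold LCSp; infer_instance

instance (S : ℕ) (c : Fin S → ℕ) : InnerProductSpace ℝ (LCSp S c) := by
  unfold LCSp; infer_instance

instance (S : ℕ) (c : Fin S → ℕ) : CoeFun (LCSp S c) (fun _ => LCEdge S c → ℝ) :=
  ⟨fun v => WithLp.ofLp v⟩

/-- Diagonal rescaling map `v ↦ (w e * v e)_e`. -/
def dmulLC {S : ℕ} {c : Fin S → ℕ} (w : LCEdge S c → ℝ) :
    LCSp S c →ₗ[ℝ] LCSp S c where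
  toFun v := WithLp.toLp 2 (fun e => w e * v e)
  map_add' x y := WithLp.ofLp_injective 2 <| funext fun e => by
    show w e * (x e + y e) = w e * x e + w e * y e; ring
  map_smul' m x := WithLp.ofLp_injective 2 <| funext fun e => by
    show w e * (m * x e) = m * (w e * x e); ring

/-- The subspace `W` of deformations compatible with the geometric constraints
(at zero input): the sum of deformations along each chain is zero. -/
def WLC (S : ℕ) (c : Fin S → ℕ) : Submodule ℝ (LCSp S c) where
  carrier := {ε | ∀ n : Fin S, ∑ j : Fin (c n + 2), ε ⟨n, j⟩ = 0}
  zero_mem' := fun n => by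
    have : ∀ j : Fin (c n + 2), (0 : LCSp S c) ⟨n, j⟩ = 0 := fun j => rfl
    simp [this]
  add_mem' := by
    intro a b ha hb n
    have : ∀ j : Fin (c n + 2), (a + b) (⟨n, j⟩ : LCEdge S c) = a ⟨n, j⟩ + b ⟨n, j⟩ :=
      fun j => rfl
    simp [this, Finset.sum_add_distrib, ha n, hb n]
  smul_mem' := by
    intro m a ha n
    have : ∀ j : Fin (c n + 2), (m • a) (⟨n, j⟩ : LCEdge S c) = m * a ⟨n, j⟩ :=
      fun j => rfl
    simp [this, ← Finset.mul_sum, ha n]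

/-- The subspace `V = A^{-1/2} W^⊥`. -/
def VLC {S : ℕ} {c : Fin S → ℕ} (a : LCEdge S c → ℝ) : Submodule ℝ (LCSp S c) :=
  (WLC S c)ᗮ.map (dmulLC fun e => (Real.sqrt (a e))⁻¹)

/-- The box `C` of admissible stresses. -/
def CboxLC {S : ℕ} {c : Fin S → ℕ} (r : LCEdge S c → ℝ) : Set (LCSp S c) :=
  {σ | ∀ e, |σ e| ≤ r e}

/-- The rescaled polytope `Π = A^{-1/2} C`. -/
def PiLC {S : ℕ} {c : Fin S → ℕ} (a r : LCEdge S c → ℝ) : Set (LCSp S c) :=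
  (dmulLC fun e => (Real.sqrt (a e))⁻¹) '' CboxLC r

/-- The vector `k₀`: component `1` on the edges `(i_n, N)` (the last edge of
each chain), `0` elsewhere. -/
def k0LC (S : ℕ) (c : Fin S → ℕ) : LCSp S c := WithLp.toLp 2 fun e : LCEdge S c =>
  if (e.2 : ℕ) = c e.1 + 1 then (1 : ℝ) else 0

/-- Effective stiffness `ã_n` of chain `n`. -/
def atilLC {S : ℕ} {c : Fin S → ℕ} (a : LCEdge S c → ℝ) (n : Fin S) : ℝ :=
  (∑ j : Fin (c n + 2), (a ⟨n, j⟩)⁻¹)⁻¹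

/-- Effective threshold `r̃_n` of chain `n`. -/
def rtilLC {S : ℕ} {c : Fin S → ℕ} (r : LCEdge S c → ℝ) (n : Fin S) : ℝ :=
  Finset.univ.inf' ⟨⟨0, by omega⟩, Finset.mem_univ _⟩ fun j : Fin (c n + 2) => r ⟨n, j⟩

/-- The facet `Π_n` of `Π` on which the first edge of chain `n` is at its
positive threshold. -/
def PfaceLC {S : ℕ} {c : Fin S → ℕ} (a r : LCEdge S c → ℝ) (n : Fin S) :
    Set (LCSp S c) :=
  {v ∈ PiLC a r | Real.sqrt (a ⟨n, 0⟩) * v ⟨n, 0⟩ = r ⟨n, 0⟩}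

/-- The face `F_j = V ∩ Π_1 ∩ ⋯ ∩ Π_j` of the polytope `Π ∩ V`. -/
def FfaceLC {S : ℕ} {c : Fin S → ℕ} (a r : LCEdge S c → ℝ) (j : ℕ) :
    Set (LCSp S c) :=
  ↑(VLC a) ∩ PiLC a r ∩ ⋂ (n : Fin S) (_ : (n : ℕ) < j), PfaceLC a r n


/-! Along each chain the rescaled stresses `√a_e v_e` of a point of `V` coincide, so
`t ↦ (t_n / √a_e)_e` identifies `ℝ^S` with `V`, and under this identification `F_j` is the face
of the box `∏ₙ [-r̃_n, r̃_n]` on which the first `j` coordinates sit at their upper bound: a face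
of dimension `S - j`. The point `B_j` has stress `min (r̃_n, ã_n ρ̃_{j-1})` on chain `n`. By the
ordering of the `ρ̃_n` this saturates exactly the chains `n < j`, and since the minimal threshold
of a chain is attained only at its first edge, it saturates only that edge. All other
constraints of `Π` are strict at `B_j`, which puts it in the relative interior of the face cut
out by the saturated ones. -/

open Module

theorem mem_intrinsicInterior_of_isOpen {E : Type*} [NormedAddCommGroup E] [NormedSpace ℝ E]
    {s O : Set E} {x : E} (hx : x ∈ s) (hO : IsOpen O) (hxO : x ∈ O)
    (hsub : O ∩ affineSpan ℝ s ⊆ s) : x ∈ intrinsicInterior ℝ s := by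
  have hO' : ((↑) ⁻¹' O : Set (affineSpan ℝ s)) ⊆ (↑) ⁻¹' s := fun y hy => hsub ⟨hy, y.2⟩
  exact ⟨⟨x, subset_affineSpan ℝ s hx⟩,
    interior_maximal hO' (hO.preimage continuous_subtype_val) hxO, rfl⟩

theorem AffineMap.apply_eq_of_mem_affineSpan {k V₁ P₁ V₂ P₂ : Type*} [Ring k]
    [AddCommGroup V₁] [Module k V₁] [AddTorsor V₁ P₁] [AddCommGroup V₂] [Module k V₂]
    [AddTorsor V₂ P₂] (f : P₁ →ᵃ[k] P₂) {s : Set P₁} {y : P₂} (h : ∀ x ∈ s, f x = y)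
    {x : P₁} (hx : x ∈ affineSpan k s) : f x = y := by
  have hfx : f x ∈ affineSpan k (f '' s) :=
    AffineSubspace.map_span f s ▸ AffineSubspace.mem_map.2 ⟨x, hx, rfl⟩
  have hsub : f '' s ⊆ {y} := by
    rintro _ ⟨x', hx', rfl⟩
    exact h x' hx'
  exact (AffineSubspace.mem_affineSpan_singleton k V₂).1 (affineSpan_mono k hsub hfx)

theorem LinearMap.finrank_vectorSpan_image_of_injective {k V₁ V₂ : Type*} [Ring k]
    [AddCommGroup V₁] [Module k V₁] [AddCommGroup V₂] [Module k V₂]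
    {f : V₁ →ₗ[k] V₂} (hf : Function.Injective f) (s : Set V₁) :
    finrank k (vectorSpan k (f '' s)) = finrank k (vectorSpan k s) := by
  rw [← f.coe_toAffineMap, ← AffineMap.map_vectorSpan]
  exact (Submodule.equivMapOfInjective f hf _).finrank_eq.symm

theorem Sigma.sum_single_apply_mk {α : Type*} {β : α → Type*} [DecidableEq α]
    [∀ a, DecidableEq (β a)] {M : Type*} [AddCommMonoid M] (n : α) (i : β n) (x : M) (m : α)
    [Fintype (β m)] :
    ∑ j : β m, (Pi.single (⟨n, i⟩ : Σ a, β a) x : (Σ a, β a) → M) ⟨m, j⟩ =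
      if n = m then x else 0 := by
  by_cases h : n = m
  · subst h
    simp [Pi.single_apply, sigma_mk_injective.eq_iff]
  · simp [h]

def boxFace {ι : Type*} (ρ : ι → ℝ) (p : ι → Prop) : Set (ι → ℝ) :=
  {t | (∀ i, |t i| ≤ ρ i) ∧ ∀ i, p i → t i = ρ i}

section boxFace

variable {ι : Type*} [Fintype ι] [DecidableEq ι] {ρ : ι → ℝ} (p : ι → Prop) [DecidablePred p]

theorem vectorSpan_boxFace (hρ : ∀ i, 0 < ρ i) :
    vectorSpan ℝ (boxFace ρ p) =
      Submodule.span ℝ (Set.range fun i : {i // ¬ p i} => Pi.single (i : ι) (1 : ℝ)) := by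
  apply le_antisymm
  · rw [vectorSpan_def, Submodule.span_le]
    rintro _ ⟨t₁, ⟨-, ht₁⟩, t₂, ⟨-, ht₂⟩, rfl⟩
    refine (Submodule.mem_span_range_iff_exists_fun ℝ).2 ⟨fun i => t₁ i - t₂ i, ?_⟩
    ext n
    simp only [Finset.sum_apply, vsub_eq_sub, Pi.sub_apply, Pi.smul_apply, smul_eq_mul]
    by_cases hn : p n
    · rw [ht₁ n hn, ht₂ n hn, sub_self]
      refine Finset.sum_eq_zero fun i _ => ?_
      simp [show n ≠ i from fun h => i.2 (h ▸ hn)]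
    · rw [Fintype.sum_eq_single ⟨n, hn⟩ fun i hi => ?_]
      · simp
      · simp [show n ≠ i from fun h => hi (Subtype.ext h.symm)]
  · rw [Submodule.span_le]
    rintro _ ⟨⟨i, hi⟩, rfl⟩
    have hρ_mem : ρ ∈ boxFace ρ p := ⟨fun n => (abs_of_pos (hρ n)).le, fun _ _ => rfl⟩
    have hdrop_mem : ρ - ρ i • Pi.single i 1 ∈ boxFace ρ p := by
      refine ⟨fun n => ?_, fun n hn => ?_⟩
      · by_cases h : n = i
        · subst h; simp [(hρ n).le]
        · simp [h, (abs_of_pos (hρ n)).le]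
      · simp [show n ≠ i by rintro rfl; exact hi hn]
    have hvsub := vsub_mem_vectorSpan ℝ hρ_mem hdrop_mem
    rw [vsub_eq_sub, sub_sub_cancel] at hvsub
    simpa [(hρ i).ne'] using Submodule.smul_mem _ (ρ i)⁻¹ hvsub

theorem finrank_vectorSpan_boxFace (hρ : ∀ i, 0 < ρ i) :
    finrank ℝ (vectorSpan ℝ (boxFace ρ p)) = Fintype.card {i // ¬ p i} := by
  rw [vectorSpan_boxFace p hρ, finrank_span_eq_card]
  simpa [Function.comp_def] using
    (Pi.basisFun ℝ ι).linearIndependent.comp _ Subtype.val_injective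

end boxFace

section LinearConnection

variable {S : ℕ} {c : Fin S → ℕ} {a r : LCEdge S c → ℝ}

theorem inner_LCSp_eq_sum (u v : LCSp S c) : inner ℝ u v = ∑ e, u e * v e :=
  Finset.sum_congr rfl fun _ _ => mul_comm _ _

theorem apply_eq_of_mem_orthogonal_WLC {u : LCSp S c} (hu : u ∈ (WLC S c)ᗮ) (n : Fin S)
    (i : Fin (c n + 2)) : u ⟨n, i⟩ = u ⟨n, 0⟩ := by
  let δ : (Σ n : Fin S, Fin (c n + 2)) → ℝ := Pi.single ⟨n, i⟩ 1 - Pi.single ⟨n, 0⟩ 1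
  have hδ : WithLp.toLp 2 δ ∈ WLC S c := fun m => by
    change ∑ j, δ ⟨m, j⟩ = 0
    simp only [δ, Pi.sub_apply, Finset.sum_sub_distrib,
      Sigma.sum_single_apply_mk (β := fun n => Fin (c n + 2)), sub_self]
  have hinner := (inner_LCSp_eq_sum (WithLp.toLp 2 δ : LCSp S c) u).symm.trans
    ((Submodule.mem_orthogonal _ u).1 hu _ hδ)
  let f : (Σ n : Fin S, Fin (c n + 2)) → ℝ := fun e => u e
  change ∑ e, δ e * f e = 0 at hinner
  simpa only [δ, Pi.sub_apply, sub_mul, Finset.sum_sub_distrib, Pi.single_apply, ite_mul,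
    one_mul, zero_mul, Finset.sum_ite_eq', Finset.mem_univ, if_true, sub_eq_zero] using hinner

def chainLC (a : LCEdge S c → ℝ) : (Fin S → ℝ) →ₗ[ℝ] LCSp S c where
  toFun t := WithLp.toLp 2 fun e => t e.1 / Real.sqrt (a e)
  map_add' _ _ := WithLp.ofLp_injective 2 <| funext fun _ => add_div _ _ _
  map_smul' _ _ := WithLp.ofLp_injective 2 <| funext fun _ => mul_div_assoc _ _ _

theorem sqrt_mul_chainLC_apply (ha : ∀ e, 0 < a e) (t : Fin S → ℝ) (e : LCEdge S c) :
    Real.sqrt (a e) * chainLC a t e = t e.1 :=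
  mul_div_cancel₀ _ (Real.sqrt_pos.2 (ha e)).ne'

theorem chainLC_injective (ha : ∀ e, 0 < a e) : Function.Injective (chainLC a) :=
  fun t₁ t₂ h => funext fun n => by
    rw [← sqrt_mul_chainLC_apply ha t₁ ⟨n, 0⟩, ← sqrt_mul_chainLC_apply ha t₂ ⟨n, 0⟩, h]

theorem mem_VLC_iff {v : LCSp S c} : v ∈ VLC a ↔ ∃ t, chainLC a t = v := by
  constructor
  · rintro ⟨u, hu, rfl⟩
    refine ⟨fun n => u ⟨n, 0⟩, WithLp.ofLp_injective 2 <| funext fun e => ?_⟩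
    change u ⟨e.1, 0⟩ / Real.sqrt (a e) = (Real.sqrt (a e))⁻¹ * u e
    rw [div_eq_inv_mul, ← apply_eq_of_mem_orthogonal_WLC hu e.1 e.2]
    rfl
  · rintro ⟨t, rfl⟩
    refine ⟨WithLp.toLp 2 fun e => t e.1, (Submodule.mem_orthogonal _ _).2 fun w hw => ?_,
      WithLp.ofLp_injective 2 <| funext fun e => inv_mul_eq_div _ _⟩
    refine (inner_LCSp_eq_sum w _).trans ?_
    change ∑ e : (Σ n : Fin S, Fin (c n + 2)), w e * t e.1 = 0
    rw [← Finset.univ_sigma_univ, Finset.sum_sigma]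
    refine Finset.sum_eq_zero fun n _ => ?_
    change ∑ j, w ⟨n, j⟩ * t n = 0
    rw [← Finset.sum_mul, hw n, zero_mul]

theorem mem_PiLC_iff (ha : ∀ e, 0 < a e) {v : LCSp S c} :
    v ∈ PiLC a r ↔ ∀ e, |Real.sqrt (a e) * v e| ≤ r e := by
  constructor
  · rintro ⟨σ, hσ, rfl⟩ e
    change |Real.sqrt (a e) * ((Real.sqrt (a e))⁻¹ * σ e)| ≤ r e
    rw [mul_inv_cancel_left₀ (Real.sqrt_pos.2 (ha e)).ne']
    exact hσ e
  · intro h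
    refine ⟨WithLp.toLp 2 fun e => Real.sqrt (a e) * v e, h,
      WithLp.ofLp_injective 2 <| funext fun e => ?_⟩
    exact inv_mul_cancel_left₀ (Real.sqrt_pos.2 (ha e)).ne' _

theorem mem_facetsLC_iff (ha : ∀ e, 0 < a e) {j : ℕ} {v : LCSp S c} :
    v ∈ PiLC a r ∩ ⋂ (n : Fin S) (_ : (n : ℕ) < j), PfaceLC a r n ↔
      (∀ e, |Real.sqrt (a e) * v e| ≤ r e) ∧
        ∀ n : Fin S, (n : ℕ) < j → Real.sqrt (a ⟨n, 0⟩) * v ⟨n, 0⟩ = r ⟨n, 0⟩ := by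
  rw [← mem_PiLC_iff ha]
  constructor
  · rintro ⟨hv, hfaces⟩
    exact ⟨hv, fun n hn => (mem_iInter₂.1 hfaces n hn).2⟩
  · rintro ⟨hv, hfix⟩
    exact ⟨hv, mem_iInter₂.2 fun n hn => ⟨hv, hfix n hn⟩⟩

theorem le_rtilLC_iff {x : ℝ} {n : Fin S} : x ≤ rtilLC r n ↔ ∀ i, x ≤ r ⟨n, i⟩ := by
  unfold rtilLC
  exact (Finset.le_inf'_iff _ _).trans (by simp)

theorem rtilLC_le (n : Fin S) (i : Fin (c n + 2)) : rtilLC r n ≤ r ⟨n, i⟩ :=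
  le_rtilLC_iff.1 le_rfl i

theorem rtilLC_pos (hr : ∀ e, 0 < r e) (n : Fin S) : 0 < rtilLC r n :=
  (Finset.lt_inf'_iff _).2 fun _ _ => hr _

theorem atilLC_pos (ha : ∀ e, 0 < a e) (n : Fin S) : 0 < atilLC a n :=
  inv_pos.2 (Finset.sum_pos (fun _ _ => inv_pos.2 (ha _)) Finset.univ_nonempty)

theorem atilLC_mul_min (ha : ∀ e, 0 < a e) (n : Fin S) (y : ℝ) :
    atilLC a n * min (rtilLC r n / atilLC a n) y = min (rtilLC r n) (atilLC a n * y) := by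
  rw [mul_min_of_nonneg _ _ (atilLC_pos ha n).le, mul_div_cancel₀ _ (atilLC_pos ha n).ne']

theorem FfaceLC_antitone : Antitone (FfaceLC a r) := fun _ _ hij _ hv =>
  ⟨hv.1, mem_iInter₂.2 fun n hn => mem_iInter₂.1 hv.2 n (hn.trans_le hij)⟩

theorem FfaceLC_eq_image (ha : ∀ e, 0 < a e) (hmin : ∀ n, rtilLC r n = r ⟨n, 0⟩) (j : ℕ) :
    FfaceLC a r j = chainLC a '' boxFace (rtilLC r) (fun n => (n : ℕ) < j) := by
  ext v
  rw [FfaceLC, inter_assoc, mem_inter_iff, mem_facetsLC_iff ha, SetLike.mem_coe, mem_VLC_iff]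
  constructor
  · rintro ⟨⟨t, rfl⟩, hle, hfix⟩
    simp only [sqrt_mul_chainLC_apply ha] at hle
    exact ⟨t, ⟨fun n => le_rtilLC_iff.2 fun i => hle ⟨n, i⟩, fun n hn =>
      (sqrt_mul_chainLC_apply ha t ⟨n, 0⟩).symm.trans ((hfix n hn).trans (hmin n).symm)⟩, rfl⟩
  · rintro ⟨t, ⟨hle, hfix⟩, rfl⟩
    simp only [sqrt_mul_chainLC_apply ha]
    exact ⟨⟨t, rfl⟩, fun e => le_rtilLC_iff.1 (hle e.1) e.2, fun n hn =>
      (sqrt_mul_chainLC_apply ha t ⟨n, 0⟩).trans ((hfix n hn).trans (hmin n))⟩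

theorem finrank_vectorSpan_FfaceLC (ha : ∀ e, 0 < a e) (hr : ∀ e, 0 < r e)
    (hmin : ∀ n, rtilLC r n = r ⟨n, 0⟩) (j : ℕ) :
    finrank ℝ (vectorSpan ℝ (FfaceLC a r j)) = S - j := by
  rw [FfaceLC_eq_image ha hmin,
    LinearMap.finrank_vectorSpan_image_of_injective (chainLC_injective ha),
    finrank_vectorSpan_boxFace _ (rtilLC_pos hr), Fintype.card_subtype_compl,
    Fintype.card_subtype, Fin.card_filter_val_lt, Fintype.card_fin]
  omega

theorem mem_intrinsicInterior_facetsLC (ha : ∀ e, 0 < a e) {j : ℕ} {x : LCSp S c}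
    (hx : x ∈ PiLC a r ∩ ⋂ (n : Fin S) (_ : (n : ℕ) < j), PfaceLC a r n)
    (hlt : ∀ e : LCEdge S c, (∀ n : Fin S, (n : ℕ) < j → e ≠ ⟨n, 0⟩) →
      |Real.sqrt (a e) * x e| < r e) :
    x ∈ intrinsicInterior ℝ (PiLC a r ∩ ⋂ (n : Fin S) (_ : (n : ℕ) < j), PfaceLC a r n) := by
  refine mem_intrinsicInterior_of_isOpen (O := {v : LCSp S c | ∀ e : LCEdge S c,
    (∀ n : Fin S, (n : ℕ) < j → e ≠ ⟨n, 0⟩) → |Real.sqrt (a e) * v e| < r e}) hx ?_ hlt ?_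
  · simp only [ofPred_forall]
    refine isOpen_iInter_of_finite fun e => isOpen_iInter_of_finite fun _ =>
      isOpen_lt ?_ continuous_const
    exact (continuous_const.mul (EuclideanSpace.proj (𝕜 := ℝ) e).continuous).abs
  · rintro v ⟨hvlt, hvspan⟩
    -- the saturated constraints are affine equations, so they persist on the affine span
    have hfix : ∀ n : Fin S, (n : ℕ) < j → Real.sqrt (a ⟨n, 0⟩) * v ⟨n, 0⟩ = r ⟨n, 0⟩ :=
      fun n hn => AffineMap.apply_eq_of_mem_affineSpan
        (Real.sqrt (a ⟨n, 0⟩) •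
          (EuclideanSpace.proj (𝕜 := ℝ) (⟨n, 0⟩ : LCEdge S c))).toLinearMap.toAffineMap
        (fun u hu => ((mem_facetsLC_iff ha).1 hu).2 n hn) hvspan
    refine (mem_facetsLC_iff ha).2 ⟨fun e => ?_, hfix⟩
    by_cases he : ∃ n : Fin S, (n : ℕ) < j ∧ e = ⟨n, 0⟩
    · obtain ⟨n, hn, rfl⟩ := he
      rw [hfix n hn]
      exact (abs_of_nonneg ((abs_nonneg _).trans (((mem_facetsLC_iff ha).1 hx).1 _))).le
    · exact (hvlt e fun n hn h => he ⟨n, hn, h⟩).le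

theorem mem_intrinsicInterior_facetsLC_of_stress_eq (ha : ∀ e, 0 < a e) (hr : ∀ e, 0 < r e)
    (hord : StrictMono fun n => rtilLC r n / atilLC a n) (hmin : ∀ n, rtilLC r n = r ⟨n, 0⟩)
    (hfirst : ∀ n (i : Fin (c n + 2)), i ≠ 0 → r ⟨n, 0⟩ < r ⟨n, i⟩) (k : Fin S) {x : LCSp S c}
    (hx : ∀ e, Real.sqrt (a e) * x e =
      atilLC a e.1 * min (rtilLC r e.1 / atilLC a e.1) (rtilLC r k / atilLC a k)) :
    x ∈ intrinsicInterior ℝ (PiLC a r ∩ ⋂ (n : Fin S) (_ : (n : ℕ) < k + 1), PfaceLC a r n) := by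
  set y := rtilLC r k / atilLC a k
  have hstress : ∀ e, Real.sqrt (a e) * x e = min (rtilLC r e.1) (atilLC a e.1 * y) :=
    fun e => by rw [hx, atilLC_mul_min ha]
  have hpos : ∀ n, 0 < min (rtilLC r n) (atilLC a n * y) := fun n =>
    lt_min (rtilLC_pos hr n)
      (mul_pos (atilLC_pos ha n) (div_pos (rtilLC_pos hr k) (atilLC_pos ha k)))
  have hsat : ∀ n, n ≤ k → min (rtilLC r n) (atilLC a n * y) = rtilLC r n := fun n hn =>
    min_eq_left <| by rw [mul_comm, ← div_le_iff₀ (atilLC_pos ha n)]; exact hord.monotone hn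
  have hunsat : ∀ n, k < n → min (rtilLC r n) (atilLC a n * y) < rtilLC r n := fun n hn =>
    min_lt_iff.2 <| Or.inr <| by rw [mul_comm, ← lt_div_iff₀ (atilLC_pos ha n)]; exact hord hn
  have hlt_succ : ∀ n : Fin S, (n : ℕ) < k + 1 ↔ n ≤ k := fun n => Nat.lt_succ_iff
  refine mem_intrinsicInterior_facetsLC ha
    ((mem_facetsLC_iff ha).2 ⟨fun e => ?_, fun n hn => ?_⟩) fun e he => ?_
  · rw [hstress, abs_of_pos (hpos _)]
    exact (min_le_left _ _).trans (rtilLC_le _ _)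
  · exact (hstress ⟨n, 0⟩).trans ((hsat n ((hlt_succ n).1 hn)).trans (hmin n))
  · rw [hstress, abs_of_pos (hpos _)]
    rcases le_or_gt e.1 k with hek | hke
    · obtain ⟨n, i⟩ := e
      rw [hsat n hek, hmin]
      exact hfirst n i fun hi => he n ((hlt_succ n).2 hek) (by rw [hi])
    · exact (hunsat _ hke).trans_le (rtilLC_le _ _)

end LinearConnection

/-- Polyline vertices and nested faces for a linear connection: the vertices
`B_j` lie in the relative interiors of the corresponding intersections of
facets, and the faces `F_j = V ∩ Π_1 ∩ ⋯ ∩ Π_j` are nested with codimension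
one at each step. -/
theorem linear_connection_polyline_faces
    (S : ℕ) (hS : 1 ≤ S) (c : Fin S → ℕ)
    (a r : LCEdge S c → ℝ) (ha : ∀ e, 0 < a e) (hr : ∀ e, 0 < r e)
    (hord : ∀ n m : Fin S, n < m → rtilLC r n / atilLC a n < rtilLC r m / atilLC a m)
    (hmin : ∀ n : Fin S, rtilLC r n = r ⟨n, 0⟩ ∧
      ∀ j : Fin (c n + 2), j ≠ 0 → r ⟨n, 0⟩ < r ⟨n, j⟩)
    (B : Fin (S + 1) → LCSp S c)
    (hB : ∀ j : Fin (S + 1), 1 ≤ (j : ℕ) → ∀ e : LCEdge S c,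
      Real.sqrt (a e) * B j e =
        atilLC a e.1 * min (rtilLC r e.1 / atilLC a e.1)
          (rtilLC r ⟨(j : ℕ) - 1, by have := j.isLt; omega⟩ /
            atilLC a ⟨(j : ℕ) - 1, by have := j.isLt; omega⟩)) :
    (∀ j : Fin (S + 1), 1 ≤ (j : ℕ) →
      B j ∈ intrinsicInterior ℝ
        (PiLC a r ∩ ⋂ (n : Fin S) (_ : (n : ℕ) < (j : ℕ)), PfaceLC a r n)) ∧
    (FfaceLC a r 0 = ↑(VLC a) ∩ PiLC a r) ∧
    (∀ j : ℕ, 1 ≤ j → j ≤ S - 1 → FfaceLC a r j ⊆ FfaceLC a r (j - 1)) ∧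
    (∀ j : ℕ, 1 ≤ j → j ≤ S - 1 →
      Module.finrank ℝ (affineSpan ℝ (FfaceLC a r (j - 1))).direction
        = Module.finrank ℝ (affineSpan ℝ (FfaceLC a r j)).direction + 1) := by
  have hmin₀ : ∀ n, rtilLC r n = r ⟨n, 0⟩ := fun n => (hmin n).1
  refine ⟨fun j hj => ?_, by simp [FfaceLC], fun j _ _ => FfaceLC_antitone (j.sub_le 1),
    fun j hj hjS => ?_⟩
  · let k : Fin S := ⟨j - 1, by have := j.isLt; omega⟩
    have hjk : (j : ℕ) = k + 1 := by simp only [k]; omega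
    rw [hjk]
    exact mem_intrinsicInterior_facetsLC_of_stress_eq ha hr (fun n m => hord n m) hmin₀
      (fun n => (hmin n).2) k (hB j hj)
  · rw [direction_affineSpan, direction_affineSpan, finrank_vectorSpan_FfaceLC ha hr hmin₀,
      finrank_vectorSpan_FfaceLC ha hr hmin₀]
    omega

end
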